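/- Let K ⊂ ℝ^d be a nonempty compact set and let ψ be a feedforward neural network with depth L ∈ ℕ, widths w_i ∈ ℕ, and continuous activation functions σ_i such that σ_j is constant on some nonempty open interval I_j ⊂ ℝ for some j ∈ {1,…,L}. Then for every c̄ ∈ ℝ there exist a parameter ᾱ ∈ D and a radius r > 0 such that ψ(ᾱ, x) = c̄ for all x ∈ K and such that for every α in the open ball of radius r around ᾱ in D the function Ψ(α) is constant on K. -/

import Mathlib

open scoped BigOperators ENNReal NNReal

/-- Parameter space `D` of a feedforward network with `L` hidden layers and width
function `w` (`w 0 = d` is the input dimension, hidden layer `i` has width `w i` for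
`i = 1, …, L`, and the output layer has width one). The component for `i : Fin L`
consists of the weight matrix `A_{i+1}` and the bias vector `b_{i+1}`; the last
component consists of the output weights `A_{L+1}` and the output bias `b_{L+1}`. -/
abbrev Params (w : ℕ → ℕ) (L : ℕ) : Type :=
  (∀ i : Fin L, ((Fin (w (i + 1)) → Fin (w i) → ℝ) × (Fin (w (i + 1)) → ℝ))) ×
    ((Fin (w L) → ℝ) × ℝ)

/-- The number of degrees of freedom `m = Σ_{i=1}^{L+1} w_i (w_{i-1} + 1)` of the
network (with `w_{L+1} = 1`). -/
def mdim (w : ℕ → ℕ) (L : ℕ) : ℕ :=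
  (∑ i ∈ Finset.range L, w (i + 1) * (w i + 1)) + (w L + 1)

/-- Output of the first `k` hidden layers of the network. -/
noncomputable def hiddenOut (σ : ℕ → ℝ → ℝ) (w : ℕ → ℕ) (L : ℕ)
    (θ : ∀ i : Fin L, ((Fin (w (i + 1)) → Fin (w i) → ℝ) × (Fin (w (i + 1)) → ℝ))) :
    ∀ k : ℕ, k ≤ L → (Fin (w 0) → ℝ) → Fin (w k) → ℝ
  | 0, _, x => x
  | k + 1, h, x => fun i =>
      σ (k + 1)
        ((∑ j, (θ ⟨k, h⟩).1 i j * hiddenOut σ w L θ k (Nat.le_of_succ_le h) x j) +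
          (θ ⟨k, h⟩).2 i)

/-- The scalar output `ψ(α, x)` of the feedforward network. -/
noncomputable def netFun (σ : ℕ → ℝ → ℝ) (w : ℕ → ℕ) (L : ℕ) (α : Params w L)
    (x : Fin (w 0) → ℝ) : ℝ :=
  (∑ j, α.2.1 j * hiddenOut σ w L α.1 L le_rfl x j) + α.2.2

lemma continuous_hiddenOut {σ : ℕ → ℝ → ℝ} {w : ℕ → ℕ} {L : ℕ}
    (hσ : ∀ i, 1 ≤ i → i ≤ L → Continuous (σ i))
    (θ : ∀ i : Fin L, ((Fin (w (i + 1)) → Fin (w i) → ℝ) × (Fin (w (i + 1)) → ℝ))) :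
    ∀ (k : ℕ) (h : k ≤ L), Continuous fun x => hiddenOut σ w L θ k h x := by
  intro k
  induction k with
  | zero =>
      intro h
      first
        | exact continuous_id
        | (simp only [hiddenOut]; exact continuous_id)
  | succ k ih =>
      intro h
      apply continuous_pi
      intro i
      simp only [hiddenOut]
      exact (hσ (k + 1) (Nat.succ_le_succ (Nat.zero_le _)) h).comp
        ((continuous_finset_sum _ fun j _ =>
          continuous_const.mul ((continuous_apply j).comp (ih (Nat.le_of_succ_le h)))).add
          continuous_const)

lemma continuous_netFun {σ : ℕ → ℝ → ℝ} {w : ℕ → ℕ} {L : ℕ}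
    (hσ : ∀ i, 1 ≤ i → i ≤ L → Continuous (σ i)) (α : Params w L) :
    Continuous fun x => netFun σ w L α x := by
  unfold netFun
  exact (continuous_finset_sum _ fun j _ =>
    continuous_const.mul
      ((continuous_apply j).comp (continuous_hiddenOut hσ α.1 L le_rfl))).add continuous_const

/-- The parameter-to-realization map `Ψ : D → C(K)`. -/
noncomputable def Psi (σ : ℕ → ℝ → ℝ) (w : ℕ → ℕ) (L : ℕ)
    (hσ : ∀ i, 1 ≤ i → i ≤ L → Continuous (σ i)) (K : Set (Fin (w 0) → ℝ))
    (α : Params w L) : C(K, ℝ) :=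
  ⟨fun x => netFun σ w L α x, (continuous_netFun hσ α).comp continuous_subtype_val⟩

/-- The affine function `z_{a,c} : x ↦ aᵀ x + c` as an element of `C(K)`. -/
noncomputable def affineCM {n : ℕ} (K : Set (Fin n → ℝ)) (a : Fin n → ℝ) (c : ℝ) :
    C(K, ℝ) :=
  ⟨fun x => (∑ j, a j * (x : Fin n → ℝ) j) + c,
    (continuous_finset_sum _ fun j _ =>
      continuous_const.mul ((continuous_apply j).comp continuous_subtype_val)).add
      continuous_const⟩

/-- The constant function `z_c : x ↦ c` as an element of `C(K)`. -/
noncomputable def constCM {n : ℕ} (K : Set (Fin n → ℝ)) (c : ℝ) : C(K, ℝ) :=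
  ⟨fun _ => c, continuous_const⟩

/-- A function `ℝ → ℝ` is nonpolynomial if it is not the restriction of a polynomial. -/
def IsNonpolynomial (σ : ℝ → ℝ) : Prop :=
  ¬ ∃ p : Polynomial ℝ, ∀ x : ℝ, σ x = p.eval x

/-- `𝓛` is Gâteaux differentiable in its first argument at `(v, y)` with partial
derivative (identified with an element of `M(K) = C(K)*`) given by the continuous
linear functional `T`. -/
def HasGateauxDerivFirst {n : ℕ} {K : Set (Fin n → ℝ)}
    (𝓛 : C(K, ℝ) → C(K, ℝ) → ℝ) (v y : C(K, ℝ)) (T : C(K, ℝ) →L[ℝ] ℝ) : Prop :=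
  ∀ h : C(K, ℝ), Filter.Tendsto (fun s : ℝ => (𝓛 (v + s • h) y - 𝓛 v y) / s)
    (nhdsWithin 0 (Set.Ioi 0)) (nhds (T h))

/-! If `σ_{k+1}` is constant on an open set `U`, choose all weights zero and the bias of layer
`k + 1` inside `U`: the pre-activations of that layer then lie in `U` at every input. They depend
jointly continuously on parameters and input, so by compactness of `K` they stay in `U` on all of
`K` for all nearby parameters; layer `k + 1` then outputs one fixed vector on `K`, and so does the
whole network. -/

open Filter Topology

abbrev HiddenParams (w : ℕ → ℕ) (L : ℕ) : Type :=
  ∀ i : Fin L, (Fin (w (i + 1)) → Fin (w i) → ℝ) × (Fin (w (i + 1)) → ℝ)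

namespace HiddenParams

variable {w : ℕ → ℕ} {L : ℕ}

noncomputable def preAct (σ : ℕ → ℝ → ℝ) (θ : HiddenParams w L) (k : ℕ) (hk : k + 1 ≤ L)
    (x : Fin (w 0) → ℝ) (i : Fin (w (k + 1))) : ℝ :=
  (∑ j, (θ ⟨k, hk⟩).1 i j * hiddenOut σ w L θ k (Nat.le_of_succ_le hk) x j) + (θ ⟨k, hk⟩).2 i

variable {σ : ℕ → ℝ → ℝ}

theorem hiddenOut_succ (θ : HiddenParams w L) (k : ℕ) (hk : k + 1 ≤ L)
    (x : Fin (w 0) → ℝ) :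
    hiddenOut σ w L θ (k + 1) hk x = fun i => σ (k + 1) (preAct σ θ k hk x i) :=
  rfl

theorem continuous_hiddenOut_uncurry (hσ : ∀ i, 1 ≤ i → i ≤ L → Continuous (σ i))
    (k : ℕ) (hk : k ≤ L) :
    Continuous fun p : HiddenParams w L × (Fin (w 0) → ℝ) => hiddenOut σ w L p.1 k hk p.2 := by
  induction k with
  | zero => exact continuous_snd
  | succ k ih =>
    have hprev := ih (Nat.le_of_succ_le hk)
    simp only [hiddenOut_succ, preAct]
    have hσk := hσ (k + 1) (Nat.succ_pos k) hk
    fun_prop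

theorem continuous_preAct_uncurry (hσ : ∀ i, 1 ≤ i → i ≤ L → Continuous (σ i))
    (k : ℕ) (hk : k + 1 ≤ L) (i : Fin (w (k + 1))) :
    Continuous fun p : HiddenParams w L × (Fin (w 0) → ℝ) => preAct σ p.1 k hk p.2 i := by
  have hprev := continuous_hiddenOut_uncurry (w := w) hσ k (Nat.le_of_succ_le hk)
  unfold preAct
  fun_prop

theorem hiddenOut_eq_of_le {θ : HiddenParams w L} {x x' : Fin (w 0) → ℝ} {n m : ℕ}
    (hnm : n ≤ m) (hm : m ≤ L) (hn : n ≤ L)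
    (h : hiddenOut σ w L θ n hn x = hiddenOut σ w L θ n hn x') :
    hiddenOut σ w L θ m hm x = hiddenOut σ w L θ m hm x' := by
  induction m, hnm using Nat.le_induction with
  | base => exact h
  | succ m _ ih => simp only [hiddenOut_succ, preAct, ih (Nat.le_of_succ_le hm)]

theorem eventually_forall_preAct_mem {k : ℕ}
    (hσ : ∀ i, 1 ≤ i → i ≤ L → Continuous (σ i)) {K : Set (Fin (w 0) → ℝ)}
    (hK : IsCompact K) (hk : k + 1 ≤ L) {U : Set ℝ} (hU : IsOpen U) {θ₀ : HiddenParams w L}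
    (h₀ : ∀ x ∈ K, ∀ i, preAct σ θ₀ k hk x i ∈ U) :
    ∀ᶠ θ in 𝓝 θ₀, ∀ x ∈ K, ∀ i, preAct σ θ k hk x i ∈ U := by
  refine hK.eventually_forall_of_forall_eventually fun x hx => ?_
  refine Filter.eventually_all.mpr fun i => ?_
  exact (continuous_preAct_uncurry hσ k hk i).continuousAt.eventually_mem
    (hU.mem_nhds (h₀ x hx i))

end HiddenParams

theorem netFun_eq_of_hiddenOut_eq {σ : ℕ → ℝ → ℝ} {w : ℕ → ℕ} {L n : ℕ} (α : Params w L)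
    (hn : n ≤ L) {x x' : Fin (w 0) → ℝ}
    (h : hiddenOut σ w L α.1 n hn x = hiddenOut σ w L α.1 n hn x') :
    netFun σ w L α x = netFun σ w L α x' := by
  rw [netFun, netFun, HiddenParams.hiddenOut_eq_of_le hn le_rfl hn h]

theorem exists_netFun_eq_on_of_hiddenOut_eq_on {σ : ℕ → ℝ → ℝ} {w : ℕ → ℕ} {L n : ℕ}
    {K : Set (Fin (w 0) → ℝ)} (α : Params w L) (hn : n ≤ L) {v : Fin (w n) → ℝ}
    (h : ∀ x ∈ K, hiddenOut σ w L α.1 n hn x = v) :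
    ∃ c : ℝ, ∀ x ∈ K, netFun σ w L α x = c := by
  rcases K.eq_empty_or_nonempty with rfl | ⟨x₀, hx₀⟩
  · exact ⟨0, by simp⟩
  · exact ⟨netFun σ w L α x₀, fun x hx =>
      netFun_eq_of_hiddenOut_eq α hn ((h x hx).trans (h x₀ hx₀).symm)⟩

theorem eventually_exists_netFun_eq_on {σ : ℕ → ℝ → ℝ} {w : ℕ → ℕ} {L k : ℕ}
    (hσ : ∀ i, 1 ≤ i → i ≤ L → Continuous (σ i)) {K : Set (Fin (w 0) → ℝ)}
    (hK : IsCompact K) (hk : k + 1 ≤ L) {U : Set ℝ} (hU : IsOpen U) {γ : ℝ}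
    (hflat : ∀ z ∈ U, σ (k + 1) z = γ) {α₀ : Params w L}
    (h₀ : ∀ x ∈ K, ∀ i, HiddenParams.preAct σ α₀.1 k hk x i ∈ U) :
    ∀ᶠ α in 𝓝 α₀, ∃ c : ℝ, ∀ x ∈ K, netFun σ w L α x = c := by
  filter_upwards [continuous_fst.continuousAt.eventually
    (HiddenParams.eventually_forall_preAct_mem hσ hK hk hU h₀)] with α hα
  exact exists_netFun_eq_on_of_hiddenOut_eq_on α hk (v := fun _ => γ) fun x hx =>
    funext fun i => hflat _ (hα x hx i)

def flatParams (w : ℕ → ℕ) (L k : ℕ) (b c : ℝ) : Params w L :=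
  (fun i => (0, fun _ => if (i : ℕ) = k then b else 0), (0, c))

theorem netFun_flatParams (σ : ℕ → ℝ → ℝ) (w : ℕ → ℕ) (L k : ℕ) (b c : ℝ)
    (x : Fin (w 0) → ℝ) : netFun σ w L (flatParams w L k b c) x = c := by
  simp [netFun, flatParams]

theorem preAct_flatParams (σ : ℕ → ℝ → ℝ) (w : ℕ → ℕ) {L k : ℕ} (hk : k + 1 ≤ L) (b c : ℝ)
    (x : Fin (w 0) → ℝ) (i : Fin (w (k + 1))) :
    HiddenParams.preAct σ (flatParams w L k b c).1 k hk x i = b := by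
  simp [HiddenParams.preAct, flatParams]

theorem constant_realization_locally_constant_general
    (w : ℕ → ℕ) (L : ℕ) (σ : ℕ → ℝ → ℝ)
    (hσ : ∀ i, 1 ≤ i → i ≤ L → Continuous (σ i))
    (hconst : ∃ j, 1 ≤ j ∧ j ≤ L ∧ ∃ s t γ : ℝ, s < t ∧
      ∀ x ∈ Set.Ioo s t, σ j x = γ)
    (K : Set (Fin (w 0) → ℝ)) (hKc : IsCompact K)
    (cbar : ℝ) :
    ∃ (ᾱ : Params w L) (r : ℝ), 0 < r ∧
      (∀ x ∈ K, netFun σ w L ᾱ x = cbar) ∧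
      ∀ α ∈ Metric.ball ᾱ r, ∃ c : ℝ, ∀ x ∈ K, netFun σ w L α x = c := by
  obtain ⟨j, hj1, hjL, s, t, γ, hst, hγ⟩ := hconst
  obtain ⟨k, rfl⟩ : ∃ k, j = k + 1 := ⟨j - 1, by omega⟩
  obtain ⟨b, hb⟩ := Set.nonempty_Ioo.mpr hst
  have hloc := eventually_exists_netFun_eq_on hσ hKc hjL isOpen_Ioo hγ
    (α₀ := flatParams w L k b cbar) fun x _ i => by rwa [preAct_flatParams]
  obtain ⟨r, hr, hball⟩ := Metric.eventually_nhds_iff_ball.mp hloc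
  exact ⟨flatParams w L k b cbar, r, hr, fun x _ => netFun_flatParams σ w L k b cbar x, hball⟩

/-- **Construction in Lemma 4.5.** If some activation function `σ_j` is constant on a
nonempty open interval, then every constant function `x ↦ c̄` is realized on `K` by a
parameter `ᾱ ∈ D` such that all parameters in some open ball around `ᾱ` also realize
constant functions on `K`. -/
theorem constant_realization_locally_constant
    (w : ℕ → ℕ) (L : ℕ) (hL : 0 < L) (hw0 : 0 < w 0) (hw : ∀ i, 1 ≤ i → i ≤ L → 0 < w i)
    (σ : ℕ → ℝ → ℝ)
    (hσ : ∀ i, 1 ≤ i → i ≤ L → Continuous (σ i))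
    (hconst : ∃ j, 1 ≤ j ∧ j ≤ L ∧ ∃ s t γ : ℝ, s < t ∧
      ∀ x ∈ Set.Ioo s t, σ j x = γ)
    (K : Set (Fin (w 0) → ℝ)) (hKne : K.Nonempty) (hKc : IsCompact K)
    (cbar : ℝ) :
    ∃ (ᾱ : Params w L) (r : ℝ), 0 < r ∧
      (∀ x ∈ K, netFun σ w L ᾱ x = cbar) ∧
      ∀ α ∈ Metric.ball ᾱ r, ∃ c : ℝ, ∀ x ∈ K, netFun σ w L α x = c :=
  constant_realization_locally_constant_general w L σ hσ hconst K hKc cbar
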